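/- arXiv:2005.12955 — 2 statements merged into one kernel-verified Lean document; each statement's English description precedes it below -/
import Mathlib

section
/- Let N ≥ 1 be an integer and let u^N : [0,T] → S_N be a differentiable map of real-valued trigonometric polynomials satisfying the semidiscrete Fourier–Galerkin equations (∂_t u^N + u^N ∂_x u^N + ∂_x³ u^N, χ) = 0 for every χ ∈ S_N and every t ∈ [0,T]. Then the discrete Hamiltonian is conserved: the function t ↦ ∫_{−π}^{π} ( (∂_x u^N(t,x))² − (1/3) u^N(t,x)³ ) dx is constant on [0,T]. -/
noncomputable section

namespace KdVSpec

/-- The L² inner product of two real-valued functions on `(-π, π)`. -/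
def L2inner (u v : ℝ → ℝ) : ℝ := ∫ x in (-Real.pi)..Real.pi, u x * v x

/-- The L² norm of a real-valued function on `(-π, π)`. -/
def L2norm (u : ℝ → ℝ) : ℝ := Real.sqrt (∫ x in (-Real.pi)..Real.pi, (u x)^2)

/-- The sup norm of a real-valued function on `[-π, π]`. -/
def LinfNorm (u : ℝ → ℝ) : ℝ := sSup ((fun x => |u x|) '' Set.Icc (-Real.pi) Real.pi)

/-- The `W^{1,∞}` norm `‖v‖_{1,∞} = |v|_∞ + |∂ₓ v|_∞`. -/
def norm1inf (u : ℝ → ℝ) : ℝ := LinfNorm u + LinfNorm (deriv u)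

/-- The `k`-th Fourier coefficient of a (2π-periodic) function on `(-π,π)`. -/
def fCoeff (u : ℝ → ℝ) (k : ℤ) : ℂ :=
  (1 / (2 * Real.pi)) *
    ∫ x in (-Real.pi)..Real.pi, Complex.exp (-(Complex.I * (k : ℂ) * (x : ℂ))) * (u x : ℂ)

/-- The periodic Sobolev norm of order `μ`. -/
def sobNorm (μ : ℝ) (u : ℝ → ℝ) : ℝ :=
  Real.sqrt (∑' k : ℤ, (1 + (k : ℝ)^2) ^ μ * ‖fCoeff u k‖^2)

/-- `v` is a (real-valued) trigonometric polynomial of degree at most `N`,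
i.e. a member of `S_N = span{e^{ikx} : |k| ≤ N}`. -/
def InSN (N : ℕ) (v : ℝ → ℝ) : Prop :=
  ∃ c : ℤ → ℂ, ∀ x : ℝ,
    (v x : ℂ) = ∑ k ∈ Finset.Icc (-(N : ℤ)) (N : ℤ), c k * Complex.exp (Complex.I * (k : ℂ) * (x : ℂ))

/-- The orthogonal L²-projection onto `S_N`, `P_N v = Σ_{|k|≤N} v̂(k) e^{ikx}`. -/
def PN (N : ℕ) (u : ℝ → ℝ) : ℝ → ℝ := fun x =>
  (∑ k ∈ Finset.Icc (-(N : ℤ)) (N : ℤ), fCoeff u k * Complex.exp (Complex.I * (k : ℂ) * (x : ℂ))).re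

/-- Spatial derivative `∂ₓ`. -/
def dx (u : ℝ → ℝ) : ℝ → ℝ := deriv u

/-- Third spatial derivative `∂ₓ³`. -/
def dx3 (u : ℝ → ℝ) : ℝ → ℝ := deriv (deriv (deriv u))

/-- The map `F(v) = -∂ₓ³ v - P_N(v ∂ₓ v)` on `S_N`. -/
def Fmap (N : ℕ) (v : ℝ → ℝ) : ℝ → ℝ := fun x =>
  -(dx3 v x) - PN N (fun y => v y * dx v y) x

/-- `u` solves the periodic KdV equation `u_t + u u_x + u_{xxx} = 0` on the time set `I`
(with 2π-periodicity in space). -/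
def IsKdVSolution (u : ℝ → ℝ → ℝ) (I : Set ℝ) : Prop :=
  (∀ t ∈ I, ∀ x : ℝ, u t (x + 2 * Real.pi) = u t x) ∧
  (∀ t ∈ I, ∀ x : ℝ,
    deriv (fun s => u s x) t + u t x * dx (u t) x + dx3 (u t) x = 0)

/-- `w` is the semidiscrete Fourier–Galerkin approximation (with initial value `P_N u₀`)
on the time set `I`: `w(t) ∈ S_N`, `w` is differentiable in time, `w(0) = P_N u₀` and
`(∂_t w + w ∂ₓ w + ∂ₓ³ w, χ) = 0` for every `χ ∈ S_N`. -/
def SemidiscreteOn (N : ℕ) (u0 : ℝ → ℝ) (w : ℝ → ℝ → ℝ) (I : Set ℝ) : Prop :=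
  (∀ t ∈ I, InSN N (w t)) ∧
  (∀ x : ℝ, ∀ t ∈ I, DifferentiableAt ℝ (fun s => w s x) t) ∧
  (∀ x : ℝ, w 0 x = PN N u0 x) ∧
  (∀ t ∈ I, ∀ χ : ℝ → ℝ, InSN N χ →
    L2inner (fun x => deriv (fun s => w s x) t + w t x * dx (w t) x + dx3 (w t) x) χ = 0)


/-!
Along a Galerkin solution `u` the Hamiltonian satisfies
`dH/dt = 2 (∂ₓu, ∂ₓ∂ₜu) - (u², ∂ₜu) = -(∂ₜu, 2 ∂ₓ²u + P_N(u²))`,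
the last step by integration by parts and because `∂ₜu ∈ S_N`. Testing the Galerkin equation with
`χ = ∂ₓ²u` and `χ = P_N(u²)`, both in `S_N`, and integrating by parts once more (everything is
`2π`-periodic) shows that this vanishes.

For the time derivative of `H` to make sense, write `u(t) = Σⱼ u(t, xⱼ) ℓⱼ` with the trigonometric
Lagrange basis `ℓⱼ` at the `2N + 1` equispaced nodes `xⱼ` (discrete orthogonality of the
exponentials). Then `t ↦ u(t)` is a differentiable curve in the Banach algebra of bounded continuous
functions, and `H` is a continuous linear functional of a polynomial in `u(t)` and `∂ₓu(t)`.
-/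

open Complex Finset
open scoped Real ComplexConjugate BoundedContinuousFunction

lemma cexp_I_int_mul_neg_pi (k : ℤ) : exp (I * k * ↑(-π)) = exp (I * k * π) :=
  exp_eq_exp_iff_exists_int.mpr ⟨-k, by push_cast; ring⟩

lemma integral_cexp_I_int_mul (k : ℤ) :
    ∫ x in (-π)..π, exp (I * k * x) = if k = 0 then 2 * π else 0 := by
  split_ifs with hk
  · simp [hk]; ring
  rw [integral_exp_mul_complex (mul_ne_zero I_ne_zero (Int.cast_ne_zero.mpr hk)),
    cexp_I_int_mul_neg_pi, sub_self, zero_div, ofReal_zero]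

lemma sum_range_cexp_two_pi_I_mul (M : ℕ) (d : ℤ) :
    ∑ j ∈ range M, exp (2 * π * I * d * j / M) = if (M : ℤ) ∣ d then (M : ℂ) else 0 := by
  rcases Nat.eq_zero_or_pos M with rfl | hM
  · simp
  set ζ := exp (2 * π * I / M)
  have hζ : IsPrimitiveRoot ζ M := isPrimitiveRoot_exp M hM.ne'
  have hterm : ∀ j : ℕ, exp (2 * π * I * d * j / M) = (ζ ^ d) ^ j := by
    intro j
    rw [← exp_int_mul, ← exp_nat_mul]
    congr 1
    ring
  simp_rw [hterm]
  split_ifs with hd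
  · simp [(hζ.zpow_eq_one_iff_dvd d).mpr hd]
  · have hζM : (ζ ^ d) ^ M = 1 := by
      rw [← zpow_natCast, ← zpow_mul, mul_comm, zpow_mul, zpow_natCast, hζ.pow_eq_one, one_zpow]
    rw [geom_sum_eq ((hζ.zpow_eq_one_iff_dvd d).not.mpr hd), hζM, sub_self, zero_div]

lemma hasDerivAt_cexp_I_int_mul (k : ℤ) (x : ℝ) :
    HasDerivAt (fun y : ℝ => exp (I * k * y)) (I * k * exp (I * k * x)) x := by
  simpa [mul_comm] using ((hasDerivAt_id (x : ℂ)).const_mul (I * k)).cexp.comp_ofReal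

def trigPoly (N : ℕ) (c : ℤ → ℂ) (x : ℝ) : ℂ :=
  ∑ k ∈ Icc (-(N : ℤ)) N, c k * exp (I * k * x)

section TrigPoly

variable {N : ℕ}

lemma hasDerivAt_trigPoly (c : ℤ → ℂ) (x : ℝ) :
    HasDerivAt (trigPoly N c) (trigPoly N (fun k => I * k * c k) x) x :=
  (HasDerivAt.fun_sum fun k _ => (hasDerivAt_cexp_I_int_mul k x).const_mul (c k)).congr_deriv
    (sum_congr rfl fun k _ => by ring)

lemma continuous_trigPoly (c : ℤ → ℂ) : Continuous (trigPoly N c) :=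
  continuous_iff_continuousAt.mpr fun x => (hasDerivAt_trigPoly c x).continuousAt

lemma trigPoly_neg_pi (c : ℤ → ℂ) : trigPoly N c (-π) = trigPoly N c π := by
  simp only [trigPoly, cexp_I_int_mul_neg_pi]

lemma norm_trigPoly_le (c : ℤ → ℂ) (x : ℝ) :
    ‖trigPoly N c x‖ ≤ ∑ k ∈ Icc (-(N : ℤ)) N, ‖c k‖ := by
  refine (norm_sum_le _ _).trans (sum_le_sum fun k _ => ?_)
  rw [norm_mul, show I * k * x = ((k * x : ℝ) : ℂ) * I by push_cast; ring,
    norm_exp_ofReal_mul_I, mul_one]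

lemma conj_trigPoly (c : ℤ → ℂ) (x : ℝ) :
    conj (trigPoly N c x) = trigPoly N (fun k => conj (c (-k))) x := by
  simp only [trigPoly, map_sum, map_mul, ← exp_conj]
  refine sum_nbij' (- ·) (- ·) ?_ ?_ (fun _ _ => neg_neg _) (fun _ _ => neg_neg _) fun k _ => ?_
  · intro k hk; simp only [mem_Icc] at hk ⊢; omega
  · intro k hk; simp only [mem_Icc] at hk ⊢; omega
  simp [conj_ofReal]

lemma sum_mul_trigPoly {ι : Type*} (s : Finset ι) (a : ι → ℂ) (w : ι → ℤ → ℂ) (x : ℝ) :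
    ∑ i ∈ s, a i * trigPoly N (w i) x = trigPoly N (fun k => ∑ i ∈ s, a i * w i k) x := by
  simp only [trigPoly, mul_sum, sum_mul, mul_assoc]
  exact sum_comm

lemma integral_trigPoly_mul {f : ℝ → ℂ} (hf : Continuous f) (c : ℤ → ℂ) :
    ∫ x in (-π)..π, trigPoly N c x * f x =
      ∑ k ∈ Icc (-(N : ℤ)) N, c k * ∫ x in (-π)..π, exp (I * k * x) * f x := by
  simp_rw [trigPoly, sum_mul, mul_assoc]
  rw [intervalIntegral.integral_finsetSum fun k _ =>
    (by fun_prop : Continuous _).intervalIntegrable _ _]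
  simp_rw [intervalIntegral.integral_const_mul]

lemma integral_cexp_mul_trigPoly {k : ℤ} (hk : k ∈ Icc (-(N : ℤ)) N) (d : ℤ → ℂ) :
    ∫ x in (-π)..π, exp (I * k * x) * trigPoly N d x = 2 * π * d (-k) := by
  have hprod : ∀ x : ℝ, exp (I * k * x) * trigPoly N d x =
      ∑ m ∈ Icc (-(N : ℤ)) N, d m * exp (I * ↑(k + m) * x) := fun x => by
    simp only [trigPoly, mul_sum]
    exact sum_congr rfl fun m _ => by rw [mul_left_comm, ← exp_add]; push_cast; ring_nf
  simp_rw [hprod]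
  rw [intervalIntegral.integral_finsetSum fun m _ =>
    (by fun_prop : Continuous _).intervalIntegrable _ _]
  simp_rw [intervalIntegral.integral_const_mul, integral_cexp_I_int_mul]
  rw [sum_eq_single (-k)]
  · simp; ring
  · intro m _ hm; simp [show k + m ≠ 0 by omega]
  · simp only [mem_Icc] at hk ⊢; omega

lemma integral_cexp_mul_ofReal (k : ℤ) (g : ℝ → ℝ) :
    ∫ x in (-π)..π, exp (I * k * x) * g x = 2 * π * fCoeff g (-k) := by
  have hπ : (π : ℂ) ≠ 0 := ofReal_ne_zero.mpr Real.pi_ne_zero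
  simp only [fCoeff, Int.cast_neg, mul_neg, neg_mul, neg_neg]
  field_simp

lemma integral_trigPoly_mul_trigPoly (c d : ℤ → ℂ) :
    ∫ x in (-π)..π, trigPoly N c x * trigPoly N d x =
      2 * π * ∑ k ∈ Icc (-(N : ℤ)) N, c k * d (-k) := by
  rw [integral_trigPoly_mul (continuous_trigPoly d), mul_sum]
  exact sum_congr rfl fun k hk => by rw [integral_cexp_mul_trigPoly hk]; ring

lemma integral_trigPoly_mul_ofReal (c : ℤ → ℂ) {g : ℝ → ℝ} (hg : Continuous g) :
    ∫ x in (-π)..π, trigPoly N c x * g x =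
      2 * π * ∑ k ∈ Icc (-(N : ℤ)) N, c k * fCoeff g (-k) := by
  rw [integral_trigPoly_mul (by fun_prop) c, mul_sum]
  exact sum_congr rfl fun k _ => by rw [integral_cexp_mul_ofReal]; ring

lemma hasDerivAt_re_trigPoly (c : ℤ → ℂ) (x : ℝ) :
    HasDerivAt (fun y => (trigPoly N c y).re) (trigPoly N (fun k => I * k * c k) x).re x :=
  reCLM.hasFDerivAt.comp_hasDerivAt x (hasDerivAt_trigPoly c x)

end TrigPoly

def SN (N : ℕ) : Submodule ℝ (ℝ → ℝ) where
  carrier := {v | InSN N v}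
  zero_mem' := ⟨0, fun x => by simp⟩
  add_mem' := by
    rintro v w ⟨c, hc⟩ ⟨d, hd⟩
    exact ⟨c + d, fun x => by simp [hc, hd, add_mul, sum_add_distrib]⟩
  smul_mem' := by
    rintro r v ⟨c, hc⟩
    exact ⟨fun k => r * c k, fun x => by simp [hc, mul_sum, mul_assoc]⟩

namespace SN

variable {N : ℕ} {v : ℝ → ℝ}

lemma mem_iff : v ∈ SN N ↔ ∃ c, ∀ x, (v x : ℂ) = trigPoly N c x := Iff.rfl

lemma re_trigPoly_mem (c : ℤ → ℂ) : (fun x => (trigPoly N c x).re) ∈ SN N := by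
  refine ⟨fun k => (c k + conj (c (-k))) / 2, fun x => ?_⟩
  rw [re_eq_add_conj, conj_trigPoly]
  simp only [trigPoly, ← sum_add_distrib, sum_div]
  exact sum_congr rfl fun k _ => by ring

lemma exists_eq_re_trigPoly (hv : v ∈ SN N) : ∃ c, v = fun x => (trigPoly N c x).re := by
  obtain ⟨c, hc⟩ := mem_iff.mp hv
  exact ⟨c, funext fun x => by rw [← hc x, ofReal_re]⟩

lemma differentiable (hv : v ∈ SN N) : Differentiable ℝ v := by
  obtain ⟨c, rfl⟩ := exists_eq_re_trigPoly hv
  exact fun x => (hasDerivAt_re_trigPoly c x).differentiableAt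

lemma deriv_mem (hv : v ∈ SN N) : deriv v ∈ SN N := by
  obtain ⟨c, rfl⟩ := exists_eq_re_trigPoly hv
  rw [show deriv (fun x => (trigPoly N c x).re) = _ from
    funext fun x => (hasDerivAt_re_trigPoly c x).deriv]
  exact re_trigPoly_mem _

lemma neg_pi (hv : v ∈ SN N) : v (-π) = v π := by
  obtain ⟨c, rfl⟩ := exists_eq_re_trigPoly hv
  simp only [trigPoly_neg_pi]

lemma exists_boundedContinuous (hv : v ∈ SN N) : ∃ f : ℝ →ᵇ ℝ, ⇑f = v := by
  obtain ⟨c, rfl⟩ := exists_eq_re_trigPoly hv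
  exact ⟨.ofNormedAddCommGroup _ (continuous_re.comp (continuous_trigPoly c)) _
    fun x => (abs_re_le_norm _).trans (norm_trigPoly_le c x), rfl⟩

lemma PN_mem (g : ℝ → ℝ) : PN N g ∈ SN N := re_trigPoly_mem _

lemma L2inner_PN (hv : v ∈ SN N) {g : ℝ → ℝ} (hg : Continuous g) :
    L2inner v (PN N g) = L2inner v g := by
  obtain ⟨c, hc⟩ := mem_iff.mp hv
  have hre : ∀ f : ℝ → ℂ, Continuous f →
      ∫ x in (-π)..π, v x * (f x).re = (∫ x in (-π)..π, trigPoly N c x * f x).re := by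
    intro f hf
    rw [← RCLike.re_to_complex, ← intervalIntegral.intervalIntegral_re]
    · simp [← hc]
    · exact ((continuous_trigPoly c).mul hf).intervalIntegrable _ _
  calc L2inner v (PN N g) = (∫ x in (-π)..π, trigPoly N c x * trigPoly N (fCoeff g) x).re :=
        hre _ (continuous_trigPoly _)
    _ = (∫ x in (-π)..π, trigPoly N c x * g x).re := by
        rw [integral_trigPoly_mul_trigPoly, integral_trigPoly_mul_ofReal c hg]
    _ = L2inner v g := by simpa [L2inner] using (hre _ (continuous_ofReal.comp hg)).symm

end SN

section Interpolation

variable {N : ℕ}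

def node (N j : ℕ) : ℝ := 2 * π * j / (2 * N + 1)

def trigLagrange (N j : ℕ) (x : ℝ) : ℝ :=
  (trigPoly N (fun k => exp (-(I * k * node N j)) / (2 * N + 1)) x).re

lemma trigLagrange_mem_SN (j : ℕ) : trigLagrange N j ∈ SN N := SN.re_trigPoly_mem _

lemma sum_range_cexp_node_mul {k m : ℤ} (hk : k ∈ Icc (-(N : ℤ)) N)
    (hm : m ∈ Icc (-(N : ℤ)) N) :
    ∑ j ∈ range (2 * N + 1), exp (I * m * node N j) * exp (-(I * k * node N j)) =
      if m = k then (2 * N + 1 : ℂ) else 0 := by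
  have h := sum_range_cexp_two_pi_I_mul (2 * N + 1) (m - k)
  simp only [mem_Icc] at hk hm
  have hdvd : ((2 * N + 1 : ℕ) : ℤ) ∣ m - k ↔ m = k := by
    refine ⟨fun hd => ?_, fun h => by simp [h]⟩
    have := Int.eq_zero_of_abs_lt_dvd hd (by rw [abs_lt]; push_cast; omega)
    omega
  simp only [hdvd] at h
  push_cast at h
  rw [← h]
  refine sum_congr rfl fun j _ => ?_
  rw [← exp_add, node]
  congr 1
  push_cast
  ring

lemma SN.eq_sum_smul_trigLagrange {v : ℝ → ℝ} (hv : v ∈ SN N) :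
    v = ∑ j ∈ range (2 * N + 1), v (node N j) • trigLagrange N j := by
  obtain ⟨c, hc⟩ := SN.mem_iff.mp hv
  have hM : (2 * N + 1 : ℂ) ≠ 0 := by exact_mod_cast (2 * N).succ_ne_zero
  have hinterp : ∀ x, ∑ j ∈ range (2 * N + 1), (v (node N j) : ℂ) *
      trigPoly N (fun k => exp (-(I * k * node N j)) / (2 * N + 1)) x = trigPoly N c x := by
    intro x
    rw [sum_mul_trigPoly]
    refine sum_congr rfl fun k hk => congrArg (· * _) ?_
    calc ∑ j ∈ range (2 * N + 1), (v (node N j) : ℂ) * (exp (-(I * k * node N j)) / (2 * N + 1))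
        = (∑ m ∈ Icc (-(N : ℤ)) N, c m * ∑ j ∈ range (2 * N + 1),
            exp (I * m * node N j) * exp (-(I * k * node N j))) / (2 * N + 1) := by
          simp only [hc, trigPoly, sum_mul, mul_sum, sum_div]
          rw [sum_comm]
          exact sum_congr rfl fun m _ => sum_congr rfl fun j _ => by ring
      _ = c k := by
          rw [sum_congr rfl fun m hm => by rw [sum_range_cexp_node_mul hk hm]]
          simp [hk, hM]
  funext x
  simp only [Finset.sum_apply, Pi.smul_apply, smul_eq_mul, trigLagrange, ← re_ofReal_mul,
    ← re_sum, hinterp, ← hc, ofReal_re]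

end Interpolation

lemma integral_deriv_mul_eq_neg_mul_deriv {a b : ℝ} {f g f' g' : ℝ → ℝ}
    (hf : ∀ x, HasDerivAt f (f' x) x) (hg : ∀ x, HasDerivAt g (g' x) x)
    (hf' : Continuous f') (hg' : Continuous g') (hfab : f a = f b) (hgab : g a = g b) :
    ∫ x in a..b, f' x * g x = -∫ x in a..b, f x * g' x := by
  have hfc : Continuous f := continuous_iff_continuousAt.2 fun x => (hf x).continuousAt
  have hgc : Continuous g := continuous_iff_continuousAt.2 fun x => (hg x).continuousAt
  have h := intervalIntegral.integral_deriv_mul_eq_sub (fun x _ => hf x) (fun x _ => hg x)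
    (hf'.intervalIntegrable a b) (hg'.intervalIntegrable a b)
  rw [intervalIntegral.integral_add ((hf'.fun_mul hgc).intervalIntegrable _ _)
    ((hfc.fun_mul hg').intervalIntegrable _ _), hfab, hgab, sub_self] at h
  linarith

lemma L2inner_comm (f g : ℝ → ℝ) : L2inner f g = L2inner g f := by
  simp only [L2inner, mul_comm]

structure IsPeriodicDerivStable (V : Set (ℝ → ℝ)) : Prop where
  differentiable : ∀ v ∈ V, Differentiable ℝ v
  deriv_mem : ∀ v ∈ V, deriv v ∈ V
  neg_pi : ∀ v ∈ V, v (-π) = v π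

namespace IsPeriodicDerivStable

variable {V : Set (ℝ → ℝ)}

lemma continuous (hV : IsPeriodicDerivStable V) {v : ℝ → ℝ} (hv : v ∈ V) : Continuous v :=
  (hV.differentiable v hv).continuous

lemma hasDerivAt (hV : IsPeriodicDerivStable V) {v : ℝ → ℝ} (hv : v ∈ V) (x : ℝ) :
    HasDerivAt v (deriv v x) x :=
  (hV.differentiable v hv x).hasDerivAt

lemma L2inner_deriv_left (hV : IsPeriodicDerivStable V) {f g : ℝ → ℝ} (hf : f ∈ V)
    (hg : g ∈ V) : L2inner (deriv f) g = -L2inner f (deriv g) :=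
  integral_deriv_mul_eq_neg_mul_deriv (hV.hasDerivAt hf) (hV.hasDerivAt hg)
    (hV.continuous (hV.deriv_mem f hf)) (hV.continuous (hV.deriv_mem g hg)) (hV.neg_pi f hf)
    (hV.neg_pi g hg)

lemma L2inner_deriv_self (hV : IsPeriodicDerivStable V) {f : ℝ → ℝ} (hf : f ∈ V) :
    L2inner (deriv f) f = 0 := by
  have h := hV.L2inner_deriv_left hf hf
  rw [L2inner_comm f] at h
  linarith

lemma L2inner_mul_deriv_proj_eq_zero (hV : IsPeriodicDerivStable V) {u p : ℝ → ℝ} (hu : u ∈ V)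
    (hp : p ∈ V) (hproj : ∀ w ∈ V, L2inner w p = L2inner w (fun x => u x ^ 2)) :
    L2inner (fun x => u x * deriv u x) p = 0 := by
  have hp' := hV.deriv_mem p hp
  have := hV.continuous hu
  have := hV.continuous (hV.deriv_mem u hu)
  have hpp : L2inner (deriv p) (fun x => u x ^ 2) = 0 := by
    rw [← hproj _ hp']
    exact hV.L2inner_deriv_self hp
  have hsq : ∀ x, HasDerivAt (fun x => u x ^ 2 / 2) (u x * deriv u x) x := fun x =>
    (((hV.hasDerivAt hu x).pow 2).div_const 2).congr_deriv (by push_cast; ring)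
  rw [L2inner, integral_deriv_mul_eq_neg_mul_deriv hsq (hV.hasDerivAt hp) (by fun_prop)
    (hV.continuous hp') (by rw [hV.neg_pi u hu]) (hV.neg_pi p hp),
    intervalIntegral.integral_congr (g := fun x => 2⁻¹ * (deriv p x * u x ^ 2))
      fun x _ => by ring, intervalIntegral.integral_const_mul]
  rw [L2inner] at hpp
  simp [hpp]

theorem hamiltonian_variation_eq_zero_of_galerkin (hV : IsPeriodicDerivStable V)
    {u u' p : ℝ → ℝ} (hu : u ∈ V) (hu' : u' ∈ V) (hp : p ∈ V)
    (hproj : ∀ w ∈ V, L2inner w p = L2inner w (fun x => u x ^ 2))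
    (hGal : ∀ χ ∈ V, L2inner (fun x => u' x + u x * dx u x + dx3 u x) χ = 0) :
    2 * L2inner (dx u) (dx u') - L2inner (fun x => u x ^ 2) u' = 0 := by
  have hux := hV.deriv_mem u hu
  have huxx := hV.deriv_mem _ hux
  have huxxx := hV.deriv_mem _ huxx
  have := hV.continuous hu
  have := hV.continuous hux
  have := hV.continuous huxxx
  have := hV.continuous hu'
  have hGal' : ∀ χ ∈ V, L2inner u' χ + L2inner (fun x => u x * deriv u x) χ +
      L2inner (deriv (deriv (deriv u))) χ = 0 := by
    intro χ hχ
    have := hV.continuous hχ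
    rw [← hGal χ hχ]
    simp only [L2inner, dx, dx3, add_mul]
    rw [intervalIntegral.integral_add, intervalIntegral.integral_add] <;>
      exact (by fun_prop : Continuous _).intervalIntegrable _ _
  -- Test with `χ = ∂ₓ²u` and `χ = p`: the two cross terms `⟨u ∂ₓu, ∂ₓ²u⟩` cancel.
  have hGal_uxx := hGal' _ huxx
  have hGal_p := hGal' p hp
  have hu'_uxx := hV.L2inner_deriv_left hux hu'
  have hu'_p : L2inner u' p = L2inner (fun x => u x ^ 2) u' := by
    rw [hproj u' hu', L2inner_comm]
  have huxxx_uxx := hV.L2inner_deriv_self huxx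
  have huxxx_p : L2inner (deriv (deriv (deriv u))) p =
      -2 * L2inner (fun x => u x * deriv u x) (deriv (deriv u)) := by
    have hsq : ∀ x, HasDerivAt (fun x => u x ^ 2) (2 * u x * deriv u x) x := fun x =>
      ((hV.hasDerivAt hu x).pow 2).congr_deriv (by push_cast; ring)
    rw [hproj _ huxxx, L2inner, integral_deriv_mul_eq_neg_mul_deriv (hV.hasDerivAt huxx) hsq
      (hV.continuous huxxx) (by fun_prop) (hV.neg_pi _ huxx) (by rw [hV.neg_pi u hu]), L2inner,
      ← intervalIntegral.integral_const_mul, ← intervalIntegral.integral_neg]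
    exact intervalIntegral.integral_congr fun x _ => by ring
  have huux_p := hV.L2inner_mul_deriv_proj_eq_zero hu hp hproj
  simp only [dx]
  linear_combination 2 * hu'_uxx - 2 * L2inner_comm (deriv (deriv u)) u' + hu'_p -
    2 * hGal_uxx + 2 * huxxx_uxx - hGal_p + huxxx_p + huux_p

end IsPeriodicDerivStable

lemma SN.isPeriodicDerivStable {N : ℕ} : IsPeriodicDerivStable (SN N) :=
  ⟨fun _ => SN.differentiable, fun _ => SN.deriv_mem, fun _ => SN.neg_pi⟩

def hamiltonian (v : ℝ → ℝ) : ℝ := ∫ x in (-π)..π, ((dx v x)^2 - (1/3) * (v x)^3)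

def intervalIntegralCLM (a b : ℝ) : (ℝ →ᵇ ℝ) →L[ℝ] ℝ :=
  LinearMap.mkContinuous
    { toFun := fun f => ∫ x in a..b, f x
      map_add' := fun f g => intervalIntegral.integral_add (f.continuous.intervalIntegrable _ _)
        (g.continuous.intervalIntegrable _ _)
      map_smul' := fun r f => intervalIntegral.integral_smul r _ }
    |b - a| fun f => by
      simpa [mul_comm] using
        intervalIntegral.norm_integral_le_of_norm_le_const fun x _ => f.norm_coe_le_norm x

lemma hasDerivAt_intervalIntegral_of_boundedContinuous {G : ℝ → ℝ →ᵇ ℝ} {G' : ℝ →ᵇ ℝ}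
    {t : ℝ} (hG : HasDerivAt G G' t) (a b : ℝ) :
    HasDerivAt (fun s => ∫ x in a..b, G s x) (∫ x in a..b, G' x) t :=
  (intervalIntegralCLM a b).hasFDerivAt.comp_hasDerivAt t hG

lemma hasDerivAt_hamiltonian {u ux : ℝ → ℝ →ᵇ ℝ} {u' ux' : ℝ →ᵇ ℝ} {t : ℝ}
    (hu : HasDerivAt u u' t) (hux : HasDerivAt ux ux' t) (hdx : ∀ s, dx (u s) = ux s) :
    HasDerivAt (fun s => hamiltonian (u s))
      (2 * L2inner (ux t) ux' - L2inner (fun x => u t x ^ 2) u') t := by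
  have hG := (hux.mul hux).sub (((hu.mul hu).mul hu).const_smul (1 / 3 : ℝ))
  convert hasDerivAt_intervalIntegral_of_boundedContinuous hG (-π) π using 1
  · funext s
    simp only [hamiltonian, hdx]
    exact intervalIntegral.integral_congr fun x _ => by simp; ring
  · have := (u t).continuous
    have := (ux t).continuous
    have := u'.continuous
    have := ux'.continuous
    simp only [L2inner]
    rw [← intervalIntegral.integral_const_mul, ← intervalIntegral.integral_sub
      ((by fun_prop : Continuous fun x => 2 * (ux t x * ux' x)).intervalIntegrable _ _)
      ((by fun_prop : Continuous fun x => u t x ^ 2 * u' x).intervalIntegrable _ _)]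
    exact intervalIntegral.integral_congr fun x _ => by simp; ring

lemma dx_sum_smul {ι : Type*} (S : Finset ι) {φ : ι → ℝ → ℝ}
    (hφ : ∀ i ∈ S, Differentiable ℝ (φ i)) (c : ι → ℝ) :
    dx (∑ i ∈ S, c i • φ i) = ∑ i ∈ S, c i • dx (φ i) := by
  funext x
  simp only [dx, Finset.sum_apply, Pi.smul_apply]
  rw [deriv_sum fun i hi => ((hφ i hi).const_smul (c i)).differentiableAt]
  exact sum_congr rfl fun i hi => deriv_const_smul _ (hφ i hi x)

lemma BoundedContinuousFunction.coe_sum_smul {ι : Type*} (S : Finset ι) (c : ι → ℝ)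
    (F : ι → ℝ →ᵇ ℝ) : ⇑(∑ i ∈ S, c i • F i) = ∑ i ∈ S, c i • ⇑(F i) := by
  ext x
  simp

lemma SN.hasDerivWithinAt_hamiltonian {N : ℕ} {u : ℝ → ℝ → ℝ} {s : Set ℝ} {t : ℝ}
    (hSN : ∀ τ ∈ s, u τ ∈ SN N)
    (hdiff : ∀ x, ∀ τ ∈ s, DifferentiableAt ℝ (fun r => u r x) τ) (ht : t ∈ s) :
    ∃ u' ∈ SN N, (∀ x, HasDerivWithinAt (fun r => u r x) (u' x) s t) ∧
      HasDerivWithinAt (fun r => hamiltonian (u r))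
        (2 * L2inner (dx (u t)) (dx u') - L2inner (fun x => u t x ^ 2) u') s t := by
  set S := range (2 * N + 1)
  set y : ℕ → ℝ → ℝ := fun j r => u r (node N j)
  set y' : ℕ → ℝ := fun j => deriv (y j) t
  have hy : ∀ j, HasDerivAt (y j) (y' j) t := fun j => (hdiff _ t ht).hasDerivAt
  have hL := trigLagrange_mem_SN (N := N)
  choose Φ hΦ using fun j => SN.exists_boundedContinuous (hL j)
  choose Ψ hΨ using fun j => SN.exists_boundedContinuous (SN.deriv_mem (hL j))
  have hrep : ∀ τ ∈ s, u τ = ⇑(∑ j ∈ S, y j τ • Φ j) := fun τ hτ => by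
    rw [SN.eq_sum_smul_trigLagrange (hSN τ hτ), BoundedContinuousFunction.coe_sum_smul]
    simp only [hΦ, y, S]
  have hdx : ∀ c : ℕ → ℝ, dx ⇑(∑ j ∈ S, c j • Φ j) = ⇑(∑ j ∈ S, c j • Ψ j) := fun c => by
    simp only [BoundedContinuousFunction.coe_sum_smul, hΦ, hΨ]
    exact dx_sum_smul S (fun j _ => SN.differentiable (hL j)) c
  have hU : HasDerivAt (fun r => ∑ j ∈ S, y j r • Φ j) (∑ j ∈ S, y' j • Φ j) t :=
    HasDerivAt.fun_sum fun j _ => (hy j).smul_const (Φ j)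
  have hH := hasDerivAt_hamiltonian hU (HasDerivAt.fun_sum fun j _ => (hy j).smul_const (Ψ j))
    fun τ => hdx _
  refine ⟨⇑(∑ j ∈ S, y' j • Φ j), ?_, fun x => ?_, ?_⟩
  · rw [BoundedContinuousFunction.coe_sum_smul]
    exact sum_mem fun j _ => Submodule.smul_mem _ _ (hΦ j ▸ hL j)
  · exact ((BoundedContinuousFunction.evalCLM ℝ x).hasFDerivAt.comp_hasDerivAt t
      hU).hasDerivWithinAt.congr_of_mem (fun τ hτ => congrFun (hrep τ hτ) x) ht
  · rw [hrep t ht, hdx, hdx]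
    exact hH.hasDerivWithinAt.congr_of_mem (fun τ hτ => by rw [hrep τ hτ]) ht

theorem semidiscrete_Hamiltonian_conservation_general
    (N : ℕ) (T : ℝ)
    (uN : ℝ → ℝ → ℝ)
    (hSN : ∀ t ∈ Set.Icc (0:ℝ) T, InSN N (uN t))
    (hdiff : ∀ x : ℝ, ∀ t ∈ Set.Icc (0:ℝ) T, DifferentiableAt ℝ (fun s => uN s x) t)
    (hGal : ∀ t ∈ Set.Icc (0:ℝ) T, ∀ χ : ℝ → ℝ, InSN N χ →
      L2inner (fun x => deriv (fun s => uN s x) t + uN t x * dx (uN t) x + dx3 (uN t) x) χ = 0) :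
    ∀ t ∈ Set.Icc (0:ℝ) T,
      (∫ x in (-Real.pi)..Real.pi, ((dx (uN t) x)^2 - (1/3) * (uN t x)^3)) =
      (∫ x in (-Real.pi)..Real.pi, ((dx (uN 0) x)^2 - (1/3) * (uN 0 x)^3)) := by
  refine constant_of_has_deriv_right_zero (f := fun r => hamiltonian (uN r))
    (fun τ hτ => ?_) fun τ hτ => ?_
  · obtain ⟨_, _, _, hH⟩ := SN.hasDerivWithinAt_hamiltonian hSN hdiff hτ
    exact hH.continuousWithinAt
  have hτ' : τ ∈ Set.Icc 0 T := Set.Ico_subset_Icc_self hτ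
  obtain ⟨u', hu', hut, hH⟩ := SN.hasDerivWithinAt_hamiltonian hSN hdiff hτ'
  have hut_eq : ∀ x, deriv (fun r => uN r x) τ = u' x := fun x =>
    (uniqueDiffOn_Icc (hτ.1.trans_lt hτ.2) τ hτ').eq_deriv _
      (hdiff x τ hτ').hasDerivAt.hasDerivWithinAt (hut x)
  have hcont := (SN.differentiable (hSN τ hτ')).continuous
  have hvariation := SN.isPeriodicDerivStable.hamiltonian_variation_eq_zero_of_galerkin (hSN τ hτ') hu'
    (SN.PN_mem _) (fun w hw => SN.L2inner_PN hw (by fun_prop))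
    fun χ hχ => by simpa only [hut_eq] using hGal τ hτ' χ hχ
  rw [hvariation] at hH
  exact hH.mono_of_mem_nhdsWithin (Icc_mem_nhdsGE_of_mem hτ)

/-- conservation of the discrete Hamiltonian
`∫ ((∂ₓ u^N)² − (1/3)(u^N)³) dx` by the semidiscrete Fourier–Galerkin approximation. -/
theorem semidiscrete_Hamiltonian_conservation
    (N : ℕ) (hN : 1 ≤ N) (T : ℝ) (hT : 0 ≤ T)
    (uN : ℝ → ℝ → ℝ)
    (hSN : ∀ t ∈ Set.Icc (0:ℝ) T, InSN N (uN t))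
    (hdiff : ∀ x : ℝ, ∀ t ∈ Set.Icc (0:ℝ) T, DifferentiableAt ℝ (fun s => uN s x) t)
    (hGal : ∀ t ∈ Set.Icc (0:ℝ) T, ∀ χ : ℝ → ℝ, InSN N χ →
      L2inner (fun x => deriv (fun s => uN s x) t + uN t x * dx (uN t) x + dx3 (uN t) x) χ = 0) :
    ∀ t ∈ Set.Icc (0:ℝ) T,
      (∫ x in (-Real.pi)..Real.pi, ((dx (uN t) x)^2 - (1/3) * (uN t x)^3)) =
      (∫ x in (-Real.pi)..Real.pi, ((dx (uN 0) x)^2 - (1/3) * (uN 0 x)^3)) :=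
  semidiscrete_Hamiltonian_conservation_general N T uN hSN hdiff hGal

end KdVSpec
end
end

section
/- (Lemma 4.1) Let N ≥ 1, k > 0, and b₁,…,b_s nonzero reals, and let C₀ be a constant such that ‖∂_x ψ‖ ≤ C₀ N ‖ψ‖ for all ψ ∈ S_N. Suppose U^n ∈ S_N and real-valued Y^{n,i} ∈ S_N, 1 ≤ i ≤ s, satisfy Y^{n,0} = U^n and Y^{n,i} = Y^{n,i−1} + k b_i F((Y^{n,i} + Y^{n,i−1})/2) for 1 ≤ i ≤ s, with |U^n|_∞ ≤ R and |Y^{n,i}|_∞ ≤ R for all i, for some constant R. If (k/2) · max_{1≤i≤s} |b_i| · C₀ N R < 1, then the tuple (Y^{n,1},…,Y^{n,s}) is the unique such solution: any other family (Z^{n,1},…,Z^{n,s}) in S_N satisfying the same equations with the same sup-norm bound R coincides with it. -/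
noncomputable section

namespace KdVSpec

/-!
Two solutions share the stage `Y^{n,0} = U^n`, so by induction it suffices to compare two
solutions `Y`, `Z` of one implicit-midpoint stage with the same previous stage `P`. With `u`, `v`
the two midpoints and `d = u - v = (Y - Z)/2`, the stage equations give `2d = k b (F u - F v)`.
In `L²`, `(d, F u - F v) = (∂ₓd, (u² - v²)/2)`, and `(u² - v²)/2 = (u + v)/2 · d` with
`|u + v| ≤ 2R`, so Cauchy–Schwarz and the inverse inequality bound it by `C₀ N R ‖d‖²`.
Hence `‖d‖² ≤ (k/2)|b| C₀ N R ‖d‖²`, which forces `d = 0`.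
-/

open Complex ComplexConjugate Finset Real

def trigSum (M : ℕ) (c : ℤ → ℂ) (x : ℝ) : ℂ :=
  ∑ k ∈ Icc (-(M : ℤ)) M, c k * exp (I * k * x)

theorem hasDerivAt_trigSum (M : ℕ) (c : ℤ → ℂ) (x : ℝ) :
    HasDerivAt (trigSum M c) (trigSum M (fun k => I * k * c k) x) x := by
  unfold trigSum
  refine HasDerivAt.fun_sum fun k _ => ?_
  have h := (((hasDerivAt_id (x : ℝ)).ofReal_comp.const_mul (I * k)).cexp).const_mul (c k)
  simp only [id, ofReal_one, mul_one] at h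
  exact h.congr_deriv (by ring)

theorem trigSum_pi (M : ℕ) (c : ℤ → ℂ) : trigSum M c π = trigSum M c (-π) := by
  refine sum_congr rfl fun k _ => ?_
  rw [show I * k * (π : ℝ) = I * k * ((-π : ℝ) : ℂ) + k * (2 * π * I) by push_cast; ring,
    Complex.exp_add, exp_int_mul_two_pi_mul_I, mul_one]

section InSN

variable {N : ℕ} {f g : ℝ → ℝ}

theorem inSN_iff : InSN N f ↔ ∃ c, ∀ x, (f x : ℂ) = trigSum N c x := Iff.rfl

theorem eq_re_trigSum {c : ℤ → ℂ} (hc : ∀ x, (f x : ℂ) = trigSum N c x) :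
    f = fun x => (trigSum N c x).re :=
  funext fun x => by rw [← hc x, ofReal_re]

theorem InSN.hasDerivAt (hf : InSN N f) (x : ℝ) : HasDerivAt f (deriv f x) x := by
  obtain ⟨c, hc⟩ := inSN_iff.1 hf
  rw [eq_re_trigSum hc]
  exact (reCLM.hasFDerivAt.comp_hasDerivAt x (hasDerivAt_trigSum N c x)).differentiableAt.hasDerivAt

theorem InSN.differentiable (hf : InSN N f) : Differentiable ℝ f :=
  fun x => (hf.hasDerivAt x).differentiableAt

theorem InSN.continuous (hf : InSN N f) : Continuous f :=
  hf.differentiable.continuous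

theorem InSN.apply_pi (hf : InSN N f) : f π = f (-π) := by
  obtain ⟨c, hc⟩ := inSN_iff.1 hf
  exact_mod_cast (hc π).trans ((trigSum_pi N c).trans (hc (-π)).symm)

/-- The imaginary part of the complex form vanishes identically, hence so does that of its
derivative. -/
theorem InSN.deriv (hf : InSN N f) : InSN N (deriv f) := by
  obtain ⟨c, hc⟩ := inSN_iff.1 hf
  have hsum := hasDerivAt_trigSum N c
  refine inSN_iff.2 ⟨fun k => I * k * c k, fun x => ?_⟩
  have him : (trigSum N (fun k => I * k * c k) x).im = 0 := by
    have hzero : imCLM ∘ trigSum N c = fun _ => 0 :=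
      funext fun y => by simp [← hc y]
    have h := imCLM.hasFDerivAt.comp_hasDerivAt x (hsum x)
    rw [hzero] at h
    exact h.unique (hasDerivAt_const x 0)
  have hderiv : _root_.deriv f x = (trigSum N (fun k => I * k * c k) x).re := by
    rw [eq_re_trigSum hc]; exact (reCLM.hasFDerivAt.comp_hasDerivAt x (hsum x)).deriv
  exact Complex.ext (by rw [hderiv, ofReal_re]) (by rw [ofReal_im, him])

theorem InSN.add (hf : InSN N f) (hg : InSN N g) : InSN N (fun x => f x + g x) := by
  obtain ⟨c, hc⟩ := inSN_iff.1 hf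
  obtain ⟨d, hd⟩ := inSN_iff.1 hg
  refine inSN_iff.2 ⟨c + d, fun x => ?_⟩
  push_cast
  rw [hc, hd, trigSum, trigSum, trigSum, ← sum_add_distrib]
  simp only [Pi.add_apply, add_mul]

theorem InSN.sub (hf : InSN N f) (hg : InSN N g) : InSN N (fun x => f x - g x) := by
  obtain ⟨c, hc⟩ := inSN_iff.1 hf
  obtain ⟨d, hd⟩ := inSN_iff.1 hg
  refine inSN_iff.2 ⟨c - d, fun x => ?_⟩
  push_cast
  rw [hc, hd, trigSum, trigSum, trigSum, ← sum_sub_distrib]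
  simp only [Pi.sub_apply, sub_mul]

theorem InSN.div_const (hf : InSN N f) (a : ℝ) : InSN N (fun x => f x / a) := by
  obtain ⟨c, hc⟩ := inSN_iff.1 hf
  refine inSN_iff.2 ⟨fun k => c k / a, fun x => ?_⟩
  push_cast
  rw [hc, trigSum, trigSum, sum_div]
  exact sum_congr rfl fun k _ => (div_mul_eq_mul_div _ _ _).symm

theorem InSN.deriv_sub (hf : InSN N f) (hg : InSN N g) :
    _root_.deriv (fun x => f x - g x) = fun x => _root_.deriv f x - _root_.deriv g x :=
  funext fun x => deriv_fun_sub (hf.differentiable x) (hg.differentiable x)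

theorem InSN.dx3_sub (hf : InSN N f) (hg : InSN N g) :
    dx3 (fun x => f x - g x) = fun x => dx3 f x - dx3 g x := by
  unfold dx3
  rw [hf.deriv_sub hg, hf.deriv.deriv_sub hg.deriv, hf.deriv.deriv.deriv_sub hg.deriv.deriv]

end InSN

section Fourier

variable {N : ℕ} {f g χ : ℝ → ℝ}

theorem integral_exp_I_int_mul (m : ℤ) :
    ∫ x in -π..π, exp (I * m * x) = if m = 0 then (2 * π : ℂ) else 0 := by
  split_ifs with hm
  · subst hm
    simp only [Int.cast_zero, mul_zero, zero_mul, Complex.exp_zero, intervalIntegral.integral_const,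
      real_smul, ofReal_sub, ofReal_neg, mul_one]
    ring
  · have hc : I * m ≠ 0 := mul_ne_zero I_ne_zero (Int.cast_ne_zero.2 hm)
    rw [integral_exp_mul_complex hc, div_eq_zero_iff, sub_eq_zero]
    left
    rw [show I * m * (π : ℝ) = I * m * ((-π : ℝ) : ℂ) + m * (2 * π * I) by push_cast; ring,
      Complex.exp_add, exp_int_mul_two_pi_mul_I, mul_one]

theorem fCoeff_eq_of_trigSum {M : ℕ} {c : ℤ → ℂ} (hf : ∀ x, (f x : ℂ) = trigSum M c x)
    {m : ℤ} (hm : m ∈ Icc (-(M : ℤ)) M) : fCoeff f m = c m := by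
  have hterm : ∀ x : ℝ, exp (-(I * m * x)) * (f x : ℂ) =
      ∑ k ∈ Icc (-(M : ℤ)) M, c k * exp (I * ((k - m : ℤ) : ℂ) * x) := fun x => by
    rw [hf x, trigSum, mul_sum]
    refine sum_congr rfl fun k _ => ?_
    rw [show I * ((k - m : ℤ) : ℂ) * x = -(I * m * x) + I * k * x by push_cast; ring,
      Complex.exp_add]
    ring
  have horth : ∀ k ∈ Icc (-(M : ℤ)) M,
      c k * ∫ x in -π..π, exp (I * ((k - m : ℤ) : ℂ) * x) =
        if k = m then c m * (2 * π) else 0 := by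
    intro k _
    rcases eq_or_ne k m with rfl | hk
    · rw [integral_exp_I_int_mul, sub_self, if_pos rfl, if_pos rfl]
    · rw [integral_exp_I_int_mul, if_neg (sub_ne_zero.2 hk), if_neg hk, mul_zero]
  unfold fCoeff
  rw [intervalIntegral.integral_congr fun x _ => hterm x,
    intervalIntegral.integral_finsetSum fun k _ =>
      (by fun_prop : Continuous _).intervalIntegrable _ _]
  simp_rw [intervalIntegral.integral_const_mul]
  rw [sum_congr rfl horth, sum_ite_eq' _ m, if_pos hm]
  field_simp

theorem fCoeff_neg (g : ℝ → ℝ) (m : ℤ) : fCoeff g (-m) = conj (fCoeff g m) := by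
  unfold fCoeff
  rw [map_mul, ← intervalIntegral.intervalIntegral_conj]
  congr 1
  · simp [map_ofNat]
  · refine intervalIntegral.integral_congr fun x _ => ?_
    rw [map_mul, ← exp_conj, conj_ofReal]
    simp

theorem ofReal_PN (N : ℕ) (g : ℝ → ℝ) (x : ℝ) :
    (PN N g x : ℂ) = trigSum N (fCoeff g) x := by
  have hconj : conj (trigSum N (fCoeff g) x) = trigSum N (fCoeff g) x := by
    rw [trigSum, map_sum]
    refine sum_nbij' (fun k => -k) (fun k => -k) ?_ ?_ (fun k _ => neg_neg k)
      (fun k _ => neg_neg k) fun k _ => ?_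
    · intro k hk; simp only [mem_Icc] at hk ⊢; omega
    · intro k hk; simp only [mem_Icc] at hk ⊢; omega
    · rw [map_mul, ← fCoeff_neg, ← exp_conj]
      congr 2
      simp
  exact Complex.ext (ofReal_re _) (by rw [ofReal_im, conj_eq_iff_im.1 hconj])

theorem inSN_PN (N : ℕ) (g : ℝ → ℝ) : InSN N (PN N g) :=
  inSN_iff.2 ⟨fCoeff g, ofReal_PN N g⟩

theorem integral_exp_mul_eq_fCoeff_neg (g : ℝ → ℝ) (k : ℤ) :
    ∫ x in -π..π, exp (I * k * x) * (g x : ℂ) = 2 * π * fCoeff g (-k) := by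
  have hπ : (2 * π : ℂ) ≠ 0 := by exact_mod_cast Real.two_pi_pos.ne'
  rw [fCoeff, ← mul_assoc, mul_one_div_cancel hπ, one_mul]
  refine intervalIntegral.integral_congr fun x _ => ?_
  push_cast
  ring_nf

theorem ofReal_L2inner_eq_sum {c : ℤ → ℂ} (hχ : ∀ x, (χ x : ℂ) = trigSum N c x)
    (hg : Continuous g) :
    (L2inner χ g : ℂ) = 2 * π * ∑ k ∈ Icc (-(N : ℤ)) N, c k * fCoeff g (-k) := by
  calc (L2inner χ g : ℂ)
      = ∫ x in -π..π, ∑ k ∈ Icc (-(N : ℤ)) N, c k * (exp (I * k * x) * (g x : ℂ)) := by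
        rw [L2inner, ← intervalIntegral.integral_ofReal]
        refine intervalIntegral.integral_congr fun x _ => ?_
        rw [ofReal_mul, hχ x, trigSum, sum_mul]
        exact sum_congr rfl fun k _ => mul_assoc _ _ _
    _ = ∑ k ∈ Icc (-(N : ℤ)) N, c k * (2 * π * fCoeff g (-k)) := by
        rw [intervalIntegral.integral_finsetSum fun k _ =>
          (by fun_prop : Continuous _).intervalIntegrable _ _]
        simp_rw [intervalIntegral.integral_const_mul, integral_exp_mul_eq_fCoeff_neg]
    _ = 2 * π * ∑ k ∈ Icc (-(N : ℤ)) N, c k * fCoeff g (-k) := by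
        rw [mul_sum]
        exact sum_congr rfl fun k _ => by ring

theorem L2inner_PN_right (hχ : InSN N χ) (hg : Continuous g) :
    L2inner χ (PN N g) = L2inner χ g := by
  obtain ⟨c, hc⟩ := inSN_iff.1 hχ
  have h := ofReal_L2inner_eq_sum hc (inSN_PN N g).continuous
  rw [sum_congr rfl fun k hk => by
    rw [fCoeff_eq_of_trigSum (ofReal_PN N g) (by simp only [mem_Icc] at hk ⊢; omega)],
    ← ofReal_L2inner_eq_sum hc hg] at h
  exact_mod_cast h

/-- Parseval on `S_N`: `‖f‖² = 2π Σ |c_k|²`. -/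
theorem InSN.eq_zero_of_L2inner_self (hf : InSN N f) (h : L2inner f f = 0) (x : ℝ) : f x = 0 := by
  obtain ⟨c, hc⟩ := inSN_iff.1 hf
  have hparseval := ofReal_L2inner_eq_sum hc hf.continuous
  rw [h, sum_congr rfl fun k hk => by rw [fCoeff_neg, fCoeff_eq_of_trigSum hc hk, mul_conj],
    ← ofReal_sum] at hparseval
  have hsum : ∑ k ∈ Icc (-(N : ℤ)) N, normSq (c k) = 0 := by
    have h2π : (2 * π : ℂ) ≠ 0 := by exact_mod_cast Real.two_pi_pos.ne'
    exact_mod_cast (mul_eq_zero.1 hparseval.symm).resolve_left h2π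
  have hc0 : ∀ k ∈ Icc (-(N : ℤ)) N, c k = 0 := fun k hk =>
    normSq_eq_zero.1 ((sum_eq_zero_iff_of_nonneg fun k _ => normSq_nonneg (c k)).1 hsum k hk)
  have hx := hc x
  rw [trigSum, sum_eq_zero fun k hk => by rw [hc0 k hk, zero_mul]] at hx
  exact_mod_cast hx

end Fourier

section L2

variable {f g u v : ℝ → ℝ}

theorem L2inner_self_eq_L2norm_sq (f : ℝ → ℝ) : L2inner f f = L2norm f ^ 2 := by
  rw [L2norm, L2inner, sq_sqrt
    (intervalIntegral.integral_nonneg (neg_le_self pi_pos.le) fun x _ => sq_nonneg _)]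
  simp_rw [sq]

theorem L2inner_sub_right (hf : Continuous f) (hu : Continuous u) (hv : Continuous v) :
    L2inner f (fun x => u x - v x) = L2inner f u - L2inner f v := by
  simp_rw [L2inner, mul_sub]
  exact intervalIntegral.integral_sub ((hf.mul hu).intervalIntegrable _ _)
    ((hf.mul hv).intervalIntegrable _ _)

theorem L2inner_neg_right (f u : ℝ → ℝ) : L2inner f (fun x => -u x) = -L2inner f u := by
  simp_rw [L2inner, mul_neg]
  exact intervalIntegral.integral_neg

theorem L2inner_const_mul_right (f u : ℝ → ℝ) (a : ℝ) :
    L2inner f (fun x => a * u x) = a * L2inner f u := by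
  simp_rw [L2inner, mul_left_comm (f _)]
  exact intervalIntegral.integral_const_mul a _

/-- Cauchy–Schwarz, via the discriminant of `t ↦ ‖f + t g‖² ≥ 0`. -/
theorem abs_L2inner_le (hf : Continuous f) (hg : Continuous g) :
    |L2inner f g| ≤ L2norm f * L2norm g := by
  have hquad : ∀ t : ℝ, 0 ≤ L2norm g ^ 2 * (t * t) + 2 * L2inner f g * t + L2norm f ^ 2 := by
    intro t
    have hexpand : L2norm g ^ 2 * (t * t) + 2 * L2inner f g * t + L2norm f ^ 2
        = ∫ x in -π..π, (f x + t * g x) ^ 2 := by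
      rw [← L2inner_self_eq_L2norm_sq, ← L2inner_self_eq_L2norm_sq, L2inner, L2inner, L2inner,
        intervalIntegral.integral_congr fun x _ => (by ring : (f x + t * g x) ^ 2 =
          t * t * (g x * g x) + 2 * t * (f x * g x) + f x * f x),
        intervalIntegral.integral_add, intervalIntegral.integral_add,
        intervalIntegral.integral_const_mul, intervalIntegral.integral_const_mul]
      · ring
      all_goals exact (by fun_prop : Continuous _).intervalIntegrable _ _
    rw [hexpand]
    exact intervalIntegral.integral_nonneg (neg_le_self pi_pos.le) fun x _ => sq_nonneg _
  have hdisc := discrim_le_zero hquad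
  rw [discrim] at hdisc
  rw [← abs_of_nonneg (mul_nonneg (sqrt_nonneg _) (sqrt_nonneg _) : 0 ≤ L2norm f * L2norm g)]
  exact sq_le_sq.1 (by nlinarith)

theorem L2norm_le_mul_of_abs_le {R : ℝ} (hR : 0 ≤ R) (hf : Continuous f) (hg : Continuous g)
    (h : ∀ x ∈ Set.Icc (-π) π, |f x| ≤ R * |g x|) : L2norm f ≤ R * L2norm g := by
  have hsq : ∀ x ∈ Set.Icc (-π) π, f x ^ 2 ≤ R ^ 2 * g x ^ 2 := fun x hx => by
    rw [← sq_abs, ← sq_abs (g x), ← mul_pow]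
    exact pow_le_pow_left₀ (abs_nonneg _) (h x hx) 2
  have hint : ∫ x in -π..π, f x ^ 2 ≤ R ^ 2 * ∫ x in -π..π, g x ^ 2 := by
    rw [← intervalIntegral.integral_const_mul]
    exact intervalIntegral.integral_mono_on (neg_le_self pi_pos.le)
      ((hf.pow 2).intervalIntegrable _ _)
      ((continuous_const.mul (hg.pow 2)).intervalIntegrable _ _) hsq
  calc L2norm f ≤ √(R ^ 2 * ∫ x in -π..π, g x ^ 2) := sqrt_le_sqrt hint
    _ = R * L2norm g := by rw [sqrt_mul (sq_nonneg R), sqrt_sq hR, L2norm]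

theorem L2inner_deriv_right_of_periodic {f' g' : ℝ → ℝ} (hf : ∀ x, HasDerivAt f (f' x) x)
    (hg : ∀ x, HasDerivAt g (g' x) x) (hf' : Continuous f') (hg' : Continuous g')
    (hfπ : f π = f (-π)) (hgπ : g π = g (-π)) : L2inner f g' = -L2inner f' g := by
  rw [L2inner, L2inner, intervalIntegral.integral_mul_deriv_eq_deriv_mul (fun x _ => hf x)
    (fun x _ => hg x) (hf'.intervalIntegrable _ _) (hg'.intervalIntegrable _ _), hfπ, hgπ,
    sub_self, zero_sub]

theorem InSN.L2inner_deriv_right {N : ℕ} (hf : InSN N f) (hg : InSN N g) :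
    L2inner f (_root_.deriv g) = -L2inner (_root_.deriv f) g :=
  L2inner_deriv_right_of_periodic hf.hasDerivAt hg.hasDerivAt hf.deriv.continuous
    hg.deriv.continuous hf.apply_pi hg.apply_pi

theorem InSN.L2inner_self_deriv {N : ℕ} (hf : InSN N f) : L2inner f (_root_.deriv f) = 0 := by
  have h := hf.L2inner_deriv_right hf
  rw [show L2inner (_root_.deriv f) f = L2inner f (_root_.deriv f) from
    intervalIntegral.integral_congr fun x _ => mul_comm _ _] at h
  linarith

theorem InSN.L2inner_self_dx3 {N : ℕ} (hf : InSN N f) : L2inner f (dx3 f) = 0 := by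
  rw [dx3, hf.L2inner_deriv_right hf.deriv.deriv, hf.deriv.L2inner_self_deriv, neg_zero]

theorem abs_le_LinfNorm (hf : Continuous f) {x : ℝ} (hx : x ∈ Set.Icc (-π) π) :
    |f x| ≤ LinfNorm f :=
  le_csSup ((isCompact_Icc.image (continuous_abs.comp hf)).bddAbove) ⟨x, hx, rfl⟩

end L2

section Stage

variable {N : ℕ} {C₀ R : ℝ} {u v : ℝ → ℝ}

/-- The dispersive term drops out by skew-symmetry of `∂ₓ³`, `P_N` drops out against
`u - v ∈ S_N`, and `u ∂ₓu - v ∂ₓv = ∂ₓ (u² - v²) / 2` is integrated by parts. -/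
theorem L2inner_sub_Fmap_sub (hu : InSN N u) (hv : InSN N v) :
    L2inner (fun x => u x - v x) (fun x => Fmap N u x - Fmap N v x) =
      L2inner (deriv fun x => u x - v x) (fun x => (u x ^ 2 - v x ^ 2) / 2) := by
  have hd : InSN N (fun x => u x - v x) := hu.sub hv
  have hgu : Continuous fun x => u x * dx u x := hu.continuous.mul hu.deriv.continuous
  have hgv : Continuous fun x => v x * dx v x := hv.continuous.mul hv.deriv.continuous
  have hF : (fun x => Fmap N u x - Fmap N v x) = fun x =>
      -dx3 (fun x => u x - v x) x -
        (PN N (fun y => u y * dx u y) x - PN N (fun y => v y * dx v y) x) := by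
    funext x
    rw [hu.dx3_sub hv, Fmap, Fmap]
    ring
  have hq : ∀ x, HasDerivAt (fun y => (u y ^ 2 - v y ^ 2) / 2) (u x * dx u x - v x * dx v x) x :=
    fun x => ((((hu.hasDerivAt x).pow 2).sub ((hv.hasDerivAt x).pow 2)).div_const 2).congr_deriv
      (by simp only [dx]; ring)
  have hdx3 : Continuous fun x => -dx3 (fun x => u x - v x) x :=
    hd.deriv.deriv.deriv.continuous.neg
  have hPN : Continuous fun x => PN N (fun y => u y * dx u y) x - PN N (fun y => v y * dx v y) x :=
    (inSN_PN N _).continuous.sub (inSN_PN N _).continuous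
  rw [hF, L2inner_sub_right hd.continuous hdx3 hPN,
    L2inner_neg_right, hd.L2inner_self_dx3,
    L2inner_sub_right hd.continuous (inSN_PN N _).continuous (inSN_PN N _).continuous,
    L2inner_PN_right hd hgu, L2inner_PN_right hd hgv, ← L2inner_sub_right hd.continuous hgu hgv,
    L2inner_deriv_right_of_periodic hd.hasDerivAt hq hd.deriv.continuous (hgu.sub hgv)
      hd.apply_pi (by simp only [hu.apply_pi, hv.apply_pi])]
  ring

theorem abs_L2inner_sub_Fmap_sub_le
    (hC₀ : ∀ ψ : ℝ → ℝ, InSN N ψ → L2norm (dx ψ) ≤ C₀ * N * L2norm ψ)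
    (hu : InSN N u) (hv : InSN N v) (huR : ∀ x ∈ Set.Icc (-π) π, |u x| ≤ R)
    (hvR : ∀ x ∈ Set.Icc (-π) π, |v x| ≤ R) :
    |L2inner (fun x => u x - v x) (fun x => Fmap N u x - Fmap N v x)| ≤
      C₀ * N * R * L2norm (fun x => u x - v x) ^ 2 := by
  have hd : InSN N (fun x => u x - v x) := hu.sub hv
  have hR : 0 ≤ R := (abs_nonneg _).trans (huR 0 ⟨neg_nonpos.2 pi_pos.le, pi_pos.le⟩)
  have hqc : Continuous fun x => (u x ^ 2 - v x ^ 2) / 2 := by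
    have := hu.continuous; have := hv.continuous; fun_prop
  have hq : L2norm (fun x => (u x ^ 2 - v x ^ 2) / 2) ≤ R * L2norm (fun x => u x - v x) := by
    refine L2norm_le_mul_of_abs_le hR hqc hd.continuous fun x hx => ?_
    rw [show (u x ^ 2 - v x ^ 2) / 2 = (u x + v x) / 2 * (u x - v x) by ring, abs_mul]
    refine mul_le_mul_of_nonneg_right ?_ (abs_nonneg _)
    rw [abs_div, abs_two]
    linarith [abs_add_le (u x) (v x), huR x hx, hvR x hx]
  have hinv := hC₀ _ hd
  rw [L2inner_sub_Fmap_sub hu hv]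
  calc _ ≤ L2norm (deriv fun x => u x - v x) * L2norm (fun x => (u x ^ 2 - v x ^ 2) / 2) :=
        abs_L2inner_le hd.deriv.continuous hqc
    _ ≤ (C₀ * N * L2norm (fun x => u x - v x)) * (R * L2norm (fun x => u x - v x)) :=
        mul_le_mul hinv hq (sqrt_nonneg _) ((sqrt_nonneg _).trans hinv)
    _ = C₀ * N * R * L2norm (fun x => u x - v x) ^ 2 := by ring

theorem abs_midpoint_le_of_LinfNorm_le {Y P : ℝ → ℝ} (hY : Continuous Y) (hP : Continuous P)
    (hYR : LinfNorm Y ≤ R) (hPR : LinfNorm P ≤ R) :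
    ∀ x ∈ Set.Icc (-π) π, |(Y x + P x) / 2| ≤ R := fun x hx => by
  rw [abs_div, abs_two]
  linarith [abs_add_le (Y x) (P x), abs_le_LinfNorm hY hx, abs_le_LinfNorm hP hx]

theorem implicitMidpoint_stage_unique {k b : ℝ} (hk : 0 < k)
    (hC₀ : ∀ ψ : ℝ → ℝ, InSN N ψ → L2norm (dx ψ) ≤ C₀ * N * L2norm ψ)
    {P Y Z : ℝ → ℝ} (hP : InSN N P) (hY : InSN N Y) (hZ : InSN N Z)
    (hPR : LinfNorm P ≤ R) (hYR : LinfNorm Y ≤ R) (hZR : LinfNorm Z ≤ R)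
    (hYstep : ∀ x, Y x = P x + k * b * Fmap N (fun y => (Y y + P y) / 2) x)
    (hZstep : ∀ x, Z x = P x + k * b * Fmap N (fun y => (Z y + P y) / 2) x)
    (hsmall : k / 2 * |b| * C₀ * N * R < 1) : Y = Z := by
  set u := fun y => (Y y + P y) / 2
  set v := fun y => (Z y + P y) / 2
  set d := fun x => u x - v x
  have hd : InSN N d := ((hY.add hP).div_const 2).sub ((hZ.add hP).div_const 2)
  have hstep : ∀ x, 2 * d x = k * b * (Fmap N u x - Fmap N v x) := fun x => by
    simp only [d, u, v]
    linarith [hYstep x, hZstep x]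
  have hest := abs_L2inner_sub_Fmap_sub_le hC₀ ((hY.add hP).div_const 2)
    ((hZ.add hP).div_const 2) (abs_midpoint_le_of_LinfNorm_le hY.continuous hP.continuous hYR hPR)
    (abs_midpoint_le_of_LinfNorm_le hZ.continuous hP.continuous hZR hPR)
  have henergy : 2 * L2norm d ^ 2 ≤ k * |b| * (C₀ * N * R * L2norm d ^ 2) :=
    calc 2 * L2norm d ^ 2 = L2inner d (fun x => 2 * d x) := by
          rw [L2inner_const_mul_right, L2inner_self_eq_L2norm_sq]
      _ = k * b * L2inner d (fun x => Fmap N u x - Fmap N v x) := by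
          simp_rw [hstep]
          exact L2inner_const_mul_right _ _ _
      _ ≤ |k * b * L2inner d (fun x => Fmap N u x - Fmap N v x)| := le_abs_self _
      _ = k * |b| * |L2inner d (fun x => Fmap N u x - Fmap N v x)| := by
          rw [abs_mul, abs_mul, abs_of_pos hk]
      _ ≤ k * |b| * (C₀ * N * R * L2norm d ^ 2) :=
          mul_le_mul_of_nonneg_left hest (by positivity)
  have hd0 : L2inner d d = 0 := by
    rw [L2inner_self_eq_L2norm_sq]
    nlinarith [sq_nonneg (L2norm d), abs_nonneg b]
  funext x
  have := hd.eq_zero_of_L2inner_self hd0 x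
  simp only [d, u, v] at this
  linarith

end Stage

theorem composition_stages_unique_general
    (N : ℕ) (k : ℝ) (hk : 0 < k) (s : ℕ)
    (b : ℕ → ℝ)
    (C₀ : ℝ) (hC₀ : ∀ ψ : ℝ → ℝ, InSN N ψ → L2norm (dx ψ) ≤ C₀ * N * L2norm ψ)
    (R : ℝ)
    (Un : ℝ → ℝ) (hUn : InSN N Un) (hUninf : LinfNorm Un ≤ R)
    (Y Z : ℕ → ℝ → ℝ)
    (hY0 : ∀ x : ℝ, Y 0 x = Un x) (hZ0 : ∀ x : ℝ, Z 0 x = Un x)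
    (hYSN : ∀ i, 1 ≤ i → i ≤ s → InSN N (Y i))
    (hZSN : ∀ i, 1 ≤ i → i ≤ s → InSN N (Z i))
    (hYrec : ∀ i, 1 ≤ i → i ≤ s → ∀ x : ℝ,
      Y i x = Y (i-1) x + k * b i * Fmap N (fun y => (Y i y + Y (i-1) y) / 2) x)
    (hZrec : ∀ i, 1 ≤ i → i ≤ s → ∀ x : ℝ,
      Z i x = Z (i-1) x + k * b i * Fmap N (fun y => (Z i y + Z (i-1) y) / 2) x)
    (hYinf : ∀ i, 1 ≤ i → i ≤ s → LinfNorm (Y i) ≤ R)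
    (hZinf : ∀ i, 1 ≤ i → i ≤ s → LinfNorm (Z i) ≤ R)
    (hsmall : ∀ i, 1 ≤ i → i ≤ s → (k / 2) * |b i| * C₀ * N * R < 1) :
    ∀ i, 1 ≤ i → i ≤ s → ∀ x : ℝ, Y i x = Z i x := by
  have hstages : ∀ i ≤ s, Y i = Z i := by
    intro i
    induction i with
    | zero => exact fun _ => funext fun x => (hY0 x).trans (hZ0 x).symm
    | succ n ih =>
      intro hn
      have h1 : 1 ≤ n + 1 := n.succ_pos
      have hprev : InSN N (Y n) ∧ LinfNorm (Y n) ≤ R := by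
        rcases n.eq_zero_or_pos with rfl | hn0
        · rw [funext hY0]
          exact ⟨hUn, hUninf⟩
        · exact ⟨hYSN n hn0 (by omega), hYinf n hn0 (by omega)⟩
      refine implicitMidpoint_stage_unique hk hC₀ hprev.1 (hYSN _ h1 hn) (hZSN _ h1 hn) hprev.2
        (hYinf _ h1 hn) (hZinf _ h1 hn) (hYrec _ h1 hn) ?_ (hsmall _ h1 hn)
      simpa only [Nat.add_sub_cancel, ih (by omega)] using hZrec _ h1 hn
  exact fun i _ hi x => congrFun (hstages i hi) x

/-- Lemma 4.1: uniqueness of the stages of one step of the `s`-stage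
IMR-composition scheme among families bounded by `R` in the sup norm, under the
condition `(k/2)·max_{1≤i≤s}|b_i|·C₀·N·R < 1` (stated equivalently for each `i`). -/
theorem composition_stages_unique
    (N : ℕ) (hN : 1 ≤ N) (k : ℝ) (hk : 0 < k) (s : ℕ) (hs : 1 ≤ s)
    (b : ℕ → ℝ) (hb : ∀ i, 1 ≤ i → i ≤ s → b i ≠ 0)
    (C₀ : ℝ) (hC₀ : ∀ ψ : ℝ → ℝ, InSN N ψ → L2norm (dx ψ) ≤ C₀ * N * L2norm ψ)
    (R : ℝ)
    (Un : ℝ → ℝ) (hUn : InSN N Un) (hUninf : LinfNorm Un ≤ R)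
    (Y Z : ℕ → ℝ → ℝ)
    (hY0 : ∀ x : ℝ, Y 0 x = Un x) (hZ0 : ∀ x : ℝ, Z 0 x = Un x)
    (hYSN : ∀ i, 1 ≤ i → i ≤ s → InSN N (Y i))
    (hZSN : ∀ i, 1 ≤ i → i ≤ s → InSN N (Z i))
    (hYrec : ∀ i, 1 ≤ i → i ≤ s → ∀ x : ℝ,
      Y i x = Y (i-1) x + k * b i * Fmap N (fun y => (Y i y + Y (i-1) y) / 2) x)
    (hZrec : ∀ i, 1 ≤ i → i ≤ s → ∀ x : ℝ,
      Z i x = Z (i-1) x + k * b i * Fmap N (fun y => (Z i y + Z (i-1) y) / 2) x)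
    (hYinf : ∀ i, 1 ≤ i → i ≤ s → LinfNorm (Y i) ≤ R)
    (hZinf : ∀ i, 1 ≤ i → i ≤ s → LinfNorm (Z i) ≤ R)
    (hsmall : ∀ i, 1 ≤ i → i ≤ s → (k / 2) * |b i| * C₀ * N * R < 1) :
    ∀ i, 1 ≤ i → i ≤ s → ∀ x : ℝ, Y i x = Z i x :=
  composition_stages_unique_general N k hk s b C₀ hC₀ R Un hUn hUninf Y Z hY0 hZ0 hYSN hZSN hYrec
    hZrec hYinf hZinf hsmall

end KdVSpec
end
end
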